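/- Let ϑ₀, ϑ₁, ϑ₂, ω₀, ω₁, ω₂ ∈ ℝ. Define R(t) = ϑ₂t² + ϑ₁t + ϑ₀ and S(t) = −9t⁴ + ω₂t² + ω₁t + ω₀. Let y be three times differentiable on an open interval I ⊆ ℝ with y'(x) ≠ 0, R(y(x)) ≠ 0, and (y'(x))² = 4/R(y(x)) for all x ∈ I. Then for every x ∈ I (writing y = y(x)): −S(y)/R(y) − (1/2)·{y,x}(x) = (1/R(y)²)·[ 2ϑ₂ − (5/4)·(2ϑ₂y + ϑ₁)²/R(y) ] − S(y)/R(y). -/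

import Mathlib

/-- The polynomial `R` of the triconfluent-Heun-class Bose invariant. -/
def tcheunR (ϑ₀ ϑ₁ ϑ₂ : ℝ) : ℝ → ℝ := fun t => ϑ₂ * t ^ 2 + ϑ₁ * t + ϑ₀

/-- The polynomial `S` of the triconfluent-Heun-class Bose invariant. -/
def tcheunS (ω₀ ω₁ ω₂ : ℝ) : ℝ → ℝ := fun t =>
  -9 * t ^ 4 + ω₂ * t ^ 2 + ω₁ * t + ω₀

/-!
If `(y')² = F(y)` on an open set where `y' ≠ 0`, differentiating gives `y'' = F'(y)/2` and then
`y''' = F''(y) y'/2`, so the Schwarzian `{y,x} = y'''/y' - (3/2)(y''/y')²` equals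
`F''(y)/2 - 3 F'(y)²/(8 F(y))`. For `F = 4/R` this is `-2R''/R² + (5/2)R'²/R³`, which is the claim.
-/

noncomputable def schwarzian (y : ℝ → ℝ) (x : ℝ) : ℝ :=
  deriv (fun t => deriv (deriv y) t / deriv y t) x - 1 / 2 * (deriv (deriv y) x / deriv y x) ^ 2

section Autonomous

variable {y F F' F'' : ℝ → ℝ} {I : Set ℝ}

theorem deriv_deriv_eq_of_sq_deriv_eq (hI : IsOpen I)
    (hy' : ∀ x ∈ I, DifferentiableAt ℝ (deriv y) x) (hy0 : ∀ x ∈ I, deriv y x ≠ 0)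
    (hF : ∀ x ∈ I, HasDerivAt F (F' (y x)) (y x)) (heq : ∀ x ∈ I, deriv y x ^ 2 = F (y x))
    {x : ℝ} (hx : x ∈ I) :
    deriv (deriv y) x = F' (y x) / 2 := by
  have hsq : HasDerivAt (fun t => deriv y t ^ 2) (2 * deriv y x * deriv (deriv y) x) x := by
    simpa using (hy' x hx).hasDerivAt.fun_pow 2
  have hFy : HasDerivAt (fun t => F (y t)) (F' (y x) * deriv y x) x :=
    (hF x hx).comp x (differentiableAt_of_deriv_ne_zero (hy0 x hx)).hasDerivAt
  have hderiv := hsq.unique (hFy.congr_of_eventuallyEq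
    (Filter.eventuallyEq_of_mem (hI.mem_nhds hx) heq))
  field_simp
  exact mul_left_cancel₀ (hy0 x hx) (by linear_combination hderiv)

theorem schwarzian_eq_of_sq_deriv_eq (hI : IsOpen I)
    (hy' : ∀ x ∈ I, DifferentiableAt ℝ (deriv y) x) (hy0 : ∀ x ∈ I, deriv y x ≠ 0)
    (hF : ∀ x ∈ I, HasDerivAt F (F' (y x)) (y x))
    (hF' : ∀ x ∈ I, HasDerivAt F' (F'' (y x)) (y x))
    (heq : ∀ x ∈ I, deriv y x ^ 2 = F (y x)) {x : ℝ} (hx : x ∈ I) :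
    schwarzian y x = F'' (y x) / 2 - 3 * F' (y x) ^ 2 / (8 * F (y x)) := by
  have hv := hy0 x hx
  have hy2 : deriv (deriv y) =ᶠ[nhds x] fun t => F' (y t) / 2 :=
    Filter.eventuallyEq_of_mem (hI.mem_nhds hx)
      fun t ht => deriv_deriv_eq_of_sq_deriv_eq hI hy' hy0 hF heq ht
  have hy3 : HasDerivAt (deriv (deriv y)) (F'' (y x) * deriv y x / 2) x :=
    (((hF' x hx).comp x (differentiableAt_of_deriv_ne_zero hv).hasDerivAt).div_const 2
      ).congr_of_eventuallyEq hy2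
  have hquot : HasDerivAt (fun t => deriv (deriv y) t / deriv y t)
      ((F'' (y x) * deriv y x / 2 * deriv y x - deriv (deriv y) x * deriv (deriv y) x)
        / deriv y x ^ 2) x :=
    hy3.div (hy' x hx).hasDerivAt hv
  rw [schwarzian, hquot.deriv, hy2.eq_of_nhds, ← heq x hx]
  field_simp
  ring

end Autonomous

theorem hasDerivAt_tcheunR (ϑ₀ ϑ₁ ϑ₂ t : ℝ) :
    HasDerivAt (tcheunR ϑ₀ ϑ₁ ϑ₂) (2 * ϑ₂ * t + ϑ₁) t := by
  have h := ((((hasDerivAt_id t).fun_pow 2).const_mul ϑ₂).add ((hasDerivAt_id t).const_mul ϑ₁)).add_const ϑ₀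
  exact h.congr_deriv (by simp; ring)

theorem hasDerivAt_four_div_tcheunR {ϑ₀ ϑ₁ ϑ₂ t : ℝ} (ht : tcheunR ϑ₀ ϑ₁ ϑ₂ t ≠ 0) :
    HasDerivAt (fun s => 4 / tcheunR ϑ₀ ϑ₁ ϑ₂ s)
      (-4 * (2 * ϑ₂ * t + ϑ₁) / tcheunR ϑ₀ ϑ₁ ϑ₂ t ^ 2) t :=
  ((hasDerivAt_const t (4 : ℝ)).fun_div (hasDerivAt_tcheunR ϑ₀ ϑ₁ ϑ₂ t) ht).congr_deriv (by ring)

theorem hasDerivAt_deriv_four_div_tcheunR {ϑ₀ ϑ₁ ϑ₂ t : ℝ} (ht : tcheunR ϑ₀ ϑ₁ ϑ₂ t ≠ 0) :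
    HasDerivAt (fun s => -4 * (2 * ϑ₂ * s + ϑ₁) / tcheunR ϑ₀ ϑ₁ ϑ₂ s ^ 2)
      (-8 * ϑ₂ / tcheunR ϑ₀ ϑ₁ ϑ₂ t ^ 2
        + 8 * (2 * ϑ₂ * t + ϑ₁) ^ 2 / tcheunR ϑ₀ ϑ₁ ϑ₂ t ^ 3) t := by
  have hnum := (((hasDerivAt_id t).const_mul (2 * ϑ₂)).add_const ϑ₁).const_mul (-4)
  refine (hnum.fun_div ((hasDerivAt_tcheunR ϑ₀ ϑ₁ ϑ₂ t).fun_pow 2) (pow_ne_zero 2 ht)).congr_deriv ?_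
  simp only [id]
  field_simp
  ring

theorem stmt_18_general (ϑ₀ ϑ₁ ϑ₂ ω₀ ω₁ ω₂ : ℝ)
    (y : ℝ → ℝ) (I : Set ℝ) (hI : IsOpen I)
    (hy' : ∀ x ∈ I, DifferentiableAt ℝ (deriv y) x)
    (hy0 : ∀ x ∈ I, deriv y x ≠ 0)
    (hR : ∀ x ∈ I, tcheunR ϑ₀ ϑ₁ ϑ₂ (y x) ≠ 0)
    (heq : ∀ x ∈ I, (deriv y x) ^ 2 = 4 / tcheunR ϑ₀ ϑ₁ ϑ₂ (y x)) :
    ∀ x ∈ I,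
      -(tcheunS ω₀ ω₁ ω₂ (y x)) / tcheunR ϑ₀ ϑ₁ ϑ₂ (y x)
          - (1 / 2) * (deriv (fun t => deriv (deriv y) t / deriv y t) x
              - (1 / 2) * (deriv (deriv y) x / deriv y x) ^ 2)
        = (1 / (tcheunR ϑ₀ ϑ₁ ϑ₂ (y x)) ^ 2) *
            (2 * ϑ₂ - (5 / 4) * (2 * ϑ₂ * y x + ϑ₁) ^ 2 / tcheunR ϑ₀ ϑ₁ ϑ₂ (y x))
          - tcheunS ω₀ ω₁ ω₂ (y x) / tcheunR ϑ₀ ϑ₁ ϑ₂ (y x) := by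
  intro x hx
  have hschwarz : schwarzian y x = _ :=
    schwarzian_eq_of_sq_deriv_eq (F := fun s => 4 / tcheunR ϑ₀ ϑ₁ ϑ₂ s)
      (F' := fun s => -4 * (2 * ϑ₂ * s + ϑ₁) / tcheunR ϑ₀ ϑ₁ ϑ₂ s ^ 2)
      (F'' := fun s => -8 * ϑ₂ / tcheunR ϑ₀ ϑ₁ ϑ₂ s ^ 2
        + 8 * (2 * ϑ₂ * s + ϑ₁) ^ 2 / tcheunR ϑ₀ ϑ₁ ϑ₂ s ^ 3) hI hy' hy0
      (fun z hz => hasDerivAt_four_div_tcheunR (hR z hz))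
      (fun z hz => hasDerivAt_deriv_four_div_tcheunR (hR z hz)) heq hx
  rw [schwarzian] at hschwarz
  rw [hschwarz]
  field_simp [hR x hx]
  ring

/-- closed form of the potential of the triconfluent Heun class. -/
theorem stmt_18 (ϑ₀ ϑ₁ ϑ₂ ω₀ ω₁ ω₂ : ℝ)
    (y : ℝ → ℝ) (I : Set ℝ) (hI : IsOpen I)
    (hy : ∀ x ∈ I, DifferentiableAt ℝ y x)
    (hy' : ∀ x ∈ I, DifferentiableAt ℝ (deriv y) x)
    (hy'' : ∀ x ∈ I, DifferentiableAt ℝ (deriv (deriv y)) x)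
    (hy0 : ∀ x ∈ I, deriv y x ≠ 0)
    (hR : ∀ x ∈ I, tcheunR ϑ₀ ϑ₁ ϑ₂ (y x) ≠ 0)
    (heq : ∀ x ∈ I, (deriv y x) ^ 2 = 4 / tcheunR ϑ₀ ϑ₁ ϑ₂ (y x)) :
    ∀ x ∈ I,
      -(tcheunS ω₀ ω₁ ω₂ (y x)) / tcheunR ϑ₀ ϑ₁ ϑ₂ (y x)
          - (1 / 2) * (deriv (fun t => deriv (deriv y) t / deriv y t) x
              - (1 / 2) * (deriv (deriv y) x / deriv y x) ^ 2)
        = (1 / (tcheunR ϑ₀ ϑ₁ ϑ₂ (y x)) ^ 2) *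
            (2 * ϑ₂ - (5 / 4) * (2 * ϑ₂ * y x + ϑ₁) ^ 2 / tcheunR ϑ₀ ϑ₁ ϑ₂ (y x))
          - tcheunS ω₀ ω₁ ω₂ (y x) / tcheunR ϑ₀ ϑ₁ ϑ₂ (y x) :=
  stmt_18_general ϑ₀ ϑ₁ ϑ₂ ω₀ ω₁ ω₂ y I hI hy' hy0 hR heq
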